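/- arXiv:1601.05501 — 3 statements merged into one kernel-verified Lean document; each statement's English description precedes it below -/
import Mathlib

section
/- Let R be a commutative ring, n a natural number, and M a 2n-by-2n matrix over R that is alternating, i.e., the transpose of M equals -M and every diagonal entry of M is zero. Then the determinant of M is a square in R: there exists p in R with det M = p^2. -/
open Matrix

/-- Over a field where `2 ≠ 0`, the determinant of any skew-symmetric matrix is a square. -/
lemma skew_det_isSquare_field (K : Type) [Field K] (h2 : (2 : K) ≠ 0) :
    ∀ m : ℕ, ∀ A : Matrix (Fin m) (Fin m) K, Aᵀ = -A → ∃ p : K, A.det = p ^ 2 := by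
  intro m
  induction m using Nat.strong_induction_on with
  | _ m ih =>
    intro A hA
    have hdiag : ∀ i, A i i = 0 := by
      intro i
      have h := congrFun (congrFun hA i) i
      simp only [Matrix.transpose_apply, Matrix.neg_apply] at h
      have h2a : (2 : K) * A i i = 0 := by linear_combination h
      exact (mul_eq_zero.mp h2a).resolve_left h2
    by_cases h0 : A = 0
    · subst h0
      rcases Nat.eq_zero_or_pos m with hm | hm
      · subst hm
        exact ⟨1, by simp [Matrix.det_fin_zero]⟩
      · haveI : Nonempty (Fin m) := Fin.pos_iff_nonempty.mp hm
        exact ⟨0, by simp⟩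
    · -- find a nonzero entry
      have hex : ∃ i j, A i j ≠ 0 := by
        by_contra h
        push_neg at h
        exact h0 (by ext i j; simp [h i j])
      obtain ⟨i, j, hij⟩ := hex
      have hne : i ≠ j := by
        rintro rfl
        exact hij (hdiag i)
      have hm2 : 2 ≤ m := by
        by_contra h
        interval_cases m
        · exact absurd i.2 (by omega)
        · exact hne (Subsingleton.elim i j)
      obtain ⟨k, rfl⟩ : ∃ k, m = k + 2 := ⟨m - 2, by omega⟩
      set e : Fin k ⊕ Fin 2 ≃ Fin (k + 2) := finSumFinEquiv with he
      set pos0 : Fin (k + 2) := e (Sum.inr 0) with hpos0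
      set pos1 : Fin (k + 2) := e (Sum.inr 1) with hpos1
      have hpos : pos0 ≠ pos1 := fun h => by simpa using e.injective h
      -- build a permutation sending pos0 ↦ i, pos1 ↦ j
      set τ : Equiv.Perm (Fin (k + 2)) := Equiv.swap pos1 j with hτ
      have hτi : τ.symm i ≠ pos1 := by
        intro h
        apply hne
        have : i = τ pos1 := by rw [← h]; simp
        simpa [hτ] using this
      set σ : Equiv.Perm (Fin (k + 2)) := (Equiv.swap pos0 (τ.symm i)).trans τ with hσ
      have hσ0 : σ pos0 = i := by simp [hσ]
      have hσ1 : σ pos1 = j := by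
        simp only [hσ, Equiv.trans_apply]
        rw [Equiv.swap_apply_of_ne_of_ne hpos.symm (Ne.symm hτi)]
        simp [hτ]
      set D : Matrix (Fin k ⊕ Fin 2) (Fin k ⊕ Fin 2) K :=
        A.submatrix (e.trans σ) (e.trans σ) with hD
      have hDdet : D.det = A.det := Matrix.det_submatrix_equiv_self _ _
      have hDskew : Dᵀ = -D := by
        ext a b
        simpa [hD] using congrFun (congrFun hA (e.trans σ a)) (e.trans σ b)
      have hDentry : D (Sum.inr 0) (Sum.inr 1) = A i j := by
        simp [hD, Equiv.trans_apply, ← hpos0, ← hpos1, hσ0, hσ1]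
      have hDentry' : D (Sum.inr 1) (Sum.inr 0) = -A i j := by
        have := congrFun (congrFun hDskew (Sum.inr 0)) (Sum.inr 1)
        simp only [Matrix.transpose_apply, Matrix.neg_apply] at this
        rw [this, hDentry]
      have hDdiag : ∀ a, D a a = 0 := by
        intro a
        have h := congrFun (congrFun hDskew a) a
        simp only [Matrix.transpose_apply, Matrix.neg_apply] at h
        have h2a : (2 : K) * D a a = 0 := by linear_combination h
        exact (mul_eq_zero.mp h2a).resolve_left h2
      -- block decomposition
      set B11 := D.toBlocks₁₁ with hB11
      set B12 := D.toBlocks₁₂ with hB12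
      set B21 := D.toBlocks₂₁ with hB21
      set B22 := D.toBlocks₂₂ with hB22
      have hdet22 : B22.det = A i j * A i j := by
        rw [Matrix.det_fin_two]
        simp only [hB22, Matrix.toBlocks₂₂, Matrix.of_apply]
        rw [hDentry, hDentry', hDdiag, hDdiag]
        ring
      haveI : Invertible B22 :=
        B22.invertibleOfIsUnitDet
          (isUnit_iff_ne_zero.mpr (by rw [hdet22]; exact mul_ne_zero hij hij))
      have hinv : ⅟B22 = B22⁻¹ := invOf_eq_nonsing_inv B22
      -- block skew relations
      have h11 : B11ᵀ = -B11 := by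
        ext a b
        simpa [hB11, Matrix.toBlocks₁₁] using congrFun (congrFun hDskew (Sum.inl a)) (Sum.inl b)
      have h22 : B22ᵀ = -B22 := by
        ext a b
        simpa [hB22, Matrix.toBlocks₂₂] using congrFun (congrFun hDskew (Sum.inr a)) (Sum.inr b)
      have h12 : B12ᵀ = -B21 := by
        ext a b
        simpa [hB12, hB21, Matrix.toBlocks₁₂, Matrix.toBlocks₂₁] using congrFun (congrFun hDskew (Sum.inr a)) (Sum.inl b)
      have h21 : B21ᵀ = -B12 := by
        ext a b
        simpa [hB12, hB21, Matrix.toBlocks₁₂, Matrix.toBlocks₂₁] using congrFun (congrFun hDskew (Sum.inl a)) (Sum.inr b)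
      have hinvT : (B22⁻¹)ᵀ = -(B22⁻¹) := by
        rw [Matrix.transpose_nonsing_inv, h22]
        refine Matrix.inv_eq_right_inv ?_
        rw [Matrix.neg_mul, Matrix.mul_neg, neg_neg]
        exact Matrix.mul_nonsing_inv B22 (isUnit_iff_ne_zero.mpr
          (by rw [hdet22]; exact mul_ne_zero hij hij))
      -- Schur complement
      set S : Matrix (Fin k) (Fin k) K := B11 - B12 * B22⁻¹ * B21 with hS
      have hSskew : Sᵀ = -S := by
        rw [hS, Matrix.transpose_sub, Matrix.transpose_mul, Matrix.transpose_mul,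
          h11, h12, h21, hinvT]
        simp only [Matrix.neg_mul, Matrix.mul_neg, neg_neg, Matrix.mul_assoc,
          sub_neg_eq_add, neg_sub]
        abel
      obtain ⟨q, hq⟩ := ih k (by omega) S hSskew
      refine ⟨A i j * q, ?_⟩
      rw [← hDdet, ← Matrix.fromBlocks_toBlocks D]
      rw [Matrix.det_fromBlocks₂₂, hinv, ← hB11, ← hB12, ← hB21, ← hB22, ← hS, hq, hdet22]
      ring

/-- The determinant of an alternating 2n×2n matrix over a commutative ring is
a square (namely the square of its Pfaffian). -/
theorem stmt_3 (R : Type*) [CommRing R] (n : ℕ)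
    (M : Matrix (Fin (2 * n)) (Fin (2 * n)) R)
    (halt : Mᵀ = -M) (hdiag : ∀ i, M i i = 0) :
    ∃ p : R, M.det = p ^ 2 := by
  classical
  -- generic alternating matrix over polynomials
  set S := MvPolynomial (Fin (2 * n) × Fin (2 * n)) ℤ with hSdef
  set A : Matrix (Fin (2 * n)) (Fin (2 * n)) S := fun i j =>
    if i < j then MvPolynomial.X (i, j)
    else if j < i then -MvPolynomial.X (j, i) else 0 with hAdef
  have hAskew : Aᵀ = -A := by
    apply Matrix.ext; intro i j
    simp only [Matrix.transpose_apply, Matrix.neg_apply]; simp only [hAdef]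
    rcases lt_trichotomy i j with h | h | h
    · simp [h, not_lt.mpr h.le, h.ne']
    · simp [h]
    · simp [h, not_lt.mpr h.le, h.ne']; exact (neg_neg (MvPolynomial.X (j, i) : S)).symm
  set K := FractionRing S with hKdef
  have halg : Function.Injective (algebraMap S K) := IsFractionRing.injective S K
  set A' : Matrix (Fin (2 * n)) (Fin (2 * n)) K := A.map (algebraMap S K) with hA'def
  have hA'skew : A'ᵀ = -A' := by
    ext i j
    have := congrFun (congrFun hAskew i) j
    simp only [Matrix.transpose_apply, Matrix.neg_apply] at this ⊢
    simp only [hA'def, Matrix.map_apply, this, map_neg]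
  have h2 : (2 : K) ≠ 0 := two_ne_zero
  obtain ⟨t, ht⟩ := skew_det_isSquare_field K h2 (2 * n) A' hA'skew
  -- t is integral over S, hence in S
  have hdetmap : algebraMap S K A.det = A'.det := by
    rw [hA'def, ← RingHom.mapMatrix_apply, ← RingHom.map_det]
  have hint : IsIntegral S t := by
    refine ⟨Polynomial.X ^ 2 - Polynomial.C A.det,
      Polynomial.monic_X_pow_sub_C _ (by norm_num), ?_⟩
    simp only [Polynomial.eval₂_sub, Polynomial.eval₂_X_pow, Polynomial.eval₂_C]
    rw [hdetmap, ht]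
    ring
  obtain ⟨s, hs⟩ := IsIntegrallyClosed.isIntegral_iff.mp hint
  have hdetA : A.det = s ^ 2 := by
    apply halg
    rw [hdetmap, ht, map_pow, hs]
  -- specialize to M
  set φ : S →+* R := (MvPolynomial.eval₂Hom (Int.castRingHom R)
    (fun p : Fin (2 * n) × Fin (2 * n) => M p.1 p.2)) with hφ
  have hmap : A.map φ = M := by
    apply Matrix.ext; intro i j
    simp only [Matrix.map_apply]; simp only [hAdef]
    rcases lt_trichotomy i j with h | h | h
    · rw [if_pos h, hφ]; exact MvPolynomial.eval₂Hom_X' _ _ _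
    · simp [h, hdiag]
    · have hji : M j i = -M i j := by
        have := congrFun (congrFun halt i) j
        simpa using this
      rw [if_neg (by omega : ¬ i < j), if_pos h, map_neg, hφ,
        MvPolynomial.eval₂Hom_X']
      simp [hji]
  refine ⟨φ s, ?_⟩
  rw [← hmap, ← RingHom.mapMatrix_apply, ← RingHom.map_det, hdetA, map_pow]
end

section
/- There is no 2-by-2 integer matrix M with determinant equal to 1 or -1 such that M^T * A * M = B, where A is the symmetric matrix with rows (6, 2) and (2, -24) and B is the symmetric matrix with rows (74, 0) and (0, -2). In other words, the integral symmetric bilinear forms on Z^2 with Gram matrices A and B are not isomorphic. -/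
open Matrix

/-- Descent: `x² - 37 y² = ±3` has no integer solutions. -/
lemma no_pell : ∀ n : ℕ, ∀ x y : ℤ, y.natAbs = n →
    (x ^ 2 - 37 * y ^ 2 = 3 ∨ x ^ 2 - 37 * y ^ 2 = -3) → False := by
  intro n
  induction n using Nat.strong_induction_on with
  | _ n ih =>
    intro x y hy h
    set a : ℤ := |x| with ha_def
    set b : ℤ := |y| with hb_def
    have ha : a ^ 2 = x ^ 2 := sq_abs x
    have hb : b ^ 2 = y ^ 2 := sq_abs y
    have ha0 : 0 ≤ a := abs_nonneg x
    have hb0 : 0 ≤ b := abs_nonneg y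
    have key : a ^ 2 - 37 * b ^ 2 = 3 ∨ a ^ 2 - 37 * b ^ 2 = -3 := by
      rw [ha, hb]; exact h
    by_cases hsmall : b ≤ 1
    · -- small case: b ∈ {0,1}, x² ∈ {3,-3,40,34}: impossible
      have hb2 : b ^ 2 ≤ 1 := by nlinarith
      have hxb : a ^ 2 ≤ 40 := by rcases key with k | k <;> nlinarith
      have hax : a ≤ 6 := by nlinarith
      interval_cases a <;> interval_cases b <;> omega
    · push_neg at hsmall
      have hb2 : 2 ≤ b := hsmall
      -- a > 6b
      have h1 : 6 * b < a := by
        by_contra hc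
        push_neg at hc
        have : a ^ 2 ≤ 36 * b ^ 2 := by nlinarith
        rcases key with k | k <;> nlinarith
      -- a < 7b
      have h2 : a < 7 * b := by
        by_contra hc
        push_neg at hc
        have : 49 * b ^ 2 ≤ a ^ 2 := by nlinarith
        rcases key with k | k <;> nlinarith
      -- descent
      set y' : ℤ := a - 6 * b with hy'_def
      set x' : ℤ := 6 * a - 37 * b with hx'_def
      have hnew : x' ^ 2 - 37 * y' ^ 2 = 3 ∨ x' ^ 2 - 37 * y' ^ 2 = -3 := by
        rcases key with k | k
        · right; rw [hx'_def, hy'_def]; linear_combination -k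
        · left; rw [hx'_def, hy'_def]; linear_combination -k
      have hy'pos : 0 < y' := by omega
      have hy'lt : y' < b := by omega
      have hbn : (b : ℤ) = (n : ℤ) := by
        rw [hb_def, Int.abs_eq_natAbs, hy]
      have hlt : y'.natAbs < n := by omega
      exact ih y'.natAbs hlt x' y' rfl hnew

/-- The integral symmetric bilinear forms with Gram matrices
(6 2 / 2 -24) and (74 0 / 0 -2) are not isomorphic: no change of basis
M ∈ GL₂(ℤ) carries one to the other. -/
theorem stmt_9 :
    ¬ ∃ M : Matrix (Fin 2) (Fin 2) ℤ,
      (M.det = 1 ∨ M.det = -1) ∧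
      Mᵀ * !![(6 : ℤ), 2; 2, -24] * M = !![(74 : ℤ), 0; 0, -2] := by
  rintro ⟨M, hdet, h⟩
  set a := M 0 0 with ha
  set b := M 0 1 with hb
  set c := M 1 0 with hc
  set d := M 1 1 with hd
  have hdet2 : (a * d - b * c) ^ 2 = 1 := by
    have h' : M.det = a * d - b * c := by
      rw [Matrix.det_fin_two, ha, hb, hc, hd]
    rcases hdet with hh | hh <;> rw [h'] at * <;> nlinarith [hh]
  have h00 := congrFun (congrFun h 0) 0
  have h01 := congrFun (congrFun h 0) 1
  have h11 := congrFun (congrFun h 1) 1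
  simp [Matrix.mul_apply, Fin.sum_univ_two, Matrix.transpose_apply] at h00 h01 h11
  -- now h00 etc are scalar polynomial equations in a,b,c,d
  have hE00 : 3 * a ^ 2 + 2 * a * c - 12 * c ^ 2 = 37 := by
    rw [ha, hc]; nlinarith [h00]
  have hE01 : 3 * a * b + a * d + b * c - 12 * c * d = 0 := by
    rw [ha, hb, hc, hd]; nlinarith [h01]
  have hE11 : 3 * b ^ 2 + 2 * b * d - 12 * d ^ 2 = -1 := by
    rw [hb, hd]; nlinarith [h11]
  have hpell : c ^ 2 - 37 * d ^ 2 = -3 := by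
    linear_combination d ^ 2 * hE00 - 2 * c * d * hE01 + c ^ 2 * hE11 - 3 * hdet2
  exact no_pell d.natAbs c d rfl (Or.inr hpell)
end

section
/- Equip Z^23 with the symmetric bilinear form whose Gram matrix is diagonal with entries (1,...,1,-1,-1) (twenty-one entries 1 followed by two entries -1), and let v = (1,1,...,1,3,3) (twenty-one coordinates equal to 1 followed by two coordinates equal to 3), so that b(v,v) = 21 - 9 - 9 = 3. Then the orthogonal complement v^perp = {x in Z^23 : b(x,v) = 0}, with the restriction of b, is isometric to Z^22 equipped with the block-diagonal symmetric bilinear form A_2 + U + U + E_8 + E_8: there is a Z-linear bijection phi from v^perp to Z^22 carrying b to that form. -/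
open Matrix

/-- The diagonal entries (1,…,1,-1,-1) of the intersection form on
H⁴(X,ℤ) ≅ (+1)^⊕21 ⊕ (-1)^⊕2. -/
def dvec : Fin 23 → ℤ := fun i => if (i : ℕ) < 21 then 1 else -1

/-- The vector v = (1,…,1,3,3), the square of the hyperplane class, with
b(v,v) = 21 - 9 - 9 = 3. -/
def hsq : Fin 23 → ℤ := fun i => if (i : ℕ) < 21 then 1 else 3

/-- The Gram matrix of `A₂`. -/
def gramA2 : Matrix (Fin 2) (Fin 2) ℤ := !![2, 1; 1, 2]

/-- The hyperbolic plane `U`. -/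
def gramU : Matrix (Fin 2) (Fin 2) ℤ := !![0, 1; 1, 0]

/-- The Cartan matrix of `E₈` (Bourbaki numbering: the chain 1-3-4-5-6-7-8
with node 2 attached to node 4). -/
def gramE8 : Matrix (Fin 8) (Fin 8) ℤ :=
  !![ 2,  0, -1,  0,  0,  0,  0,  0;
      0,  2,  0, -1,  0,  0,  0,  0;
     -1,  0,  2, -1,  0,  0,  0,  0;
      0, -1, -1,  2, -1,  0,  0,  0;
      0,  0,  0, -1,  2, -1,  0,  0;
      0,  0,  0,  0, -1,  2, -1,  0;
      0,  0,  0,  0,  0, -1,  2, -1;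
      0,  0,  0,  0,  0,  0, -1,  2]

/-- The block-diagonal Gram matrix A₂ ⊕ U ⊕ U ⊕ E₈ ⊕ E₈ of rank 22. -/
def gramL0 :
    Matrix (Fin 2 ⊕ (Fin 2 ⊕ (Fin 2 ⊕ (Fin 8 ⊕ Fin 8))))
           (Fin 2 ⊕ (Fin 2 ⊕ (Fin 2 ⊕ (Fin 8 ⊕ Fin 8)))) ℤ :=
  Matrix.fromBlocks gramA2 0 0
    (Matrix.fromBlocks gramU 0 0
      (Matrix.fromBlocks gramU 0 0
        (Matrix.fromBlocks gramE8 0 0 gramE8)))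

/-- The row matrix cutting out the orthogonal complement of v = hsq in
ℤ²³ with respect to the diagonal form dvec. -/
def perpRow : Matrix (Fin 1) (Fin 23) ℤ := Matrix.of fun _ j => dvec j * hsq j


/-! ### Auxiliary explicit data -/

abbrev Idx := Fin 2 ⊕ (Fin 2 ⊕ (Fin 2 ⊕ (Fin 8 ⊕ Fin 8)))

def enc : Idx → Fin 22
  | .inl a => ⟨a.val, by omega⟩
  | .inr (.inl a) => ⟨a.val + 2, by omega⟩
  | .inr (.inr (.inl a)) => ⟨a.val + 4, by omega⟩
  | .inr (.inr (.inr (.inl a))) => ⟨a.val + 6, by omega⟩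
  | .inr (.inr (.inr (.inr a))) => ⟨a.val + 14, by omega⟩

def B0 : Matrix (Fin 22) (Fin 23) ℤ :=
  !![-3, -3, -3, -3, -3, -3, -3, -3, -3, -3, -3, -3, -3, -3, -3, -3, -3, 1, -3, -1, 0, -9, -9;
    -2, -2, -2, -2, -2, -2, -2, -2, -2, -2, -2, -2, -2, -2, -2, -2, -2, 0, -2, -1, 1, -6, -6;
    -3, -3, -3, -3, -3, -3, -3, -3, -3, -3, -3, -3, -3, -3, -3, -3, -3, 1, -2, -2, 0, -9, -9;
    1, 1, 1, 1, 1, 1, 1, 1, 1, 1, 1, 1, 1, 1, 1, 1, 1, 0, 1, 0, 0, 3, 3;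
    1, 1, 1, 1, 1, 1, 1, 1, 1, 0, 0, 0, 0, 0, 0, 0, 0, 0, 0, 0, 0, 3, 0;
    0, 0, 0, 0, 0, 0, 0, 0, 1, 1, 1, 1, 1, 1, 1, 1, 1, 0, 0, 0, 0, 0, 3;
    1, -1, 0, 0, 0, 0, 0, 0, 0, 0, 0, 0, 0, 0, 0, 0, 0, 0, 0, 0, 0, 0, 0;
    -1, -1, -1, 0, 0, 0, 0, 0, 0, 0, 0, 0, 0, 0, 0, 0, 0, 0, 0, 0, 0, -1, 0;
    0, 1, -1, 0, 0, 0, 0, 0, 0, 0, 0, 0, 0, 0, 0, 0, 0, 0, 0, 0, 0, 0, 0;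
    0, 0, 1, -1, 0, 0, 0, 0, 0, 0, 0, 0, 0, 0, 0, 0, 0, 0, 0, 0, 0, 0, 0;
    0, 0, 0, 1, -1, 0, 0, 0, 0, 0, 0, 0, 0, 0, 0, 0, 0, 0, 0, 0, 0, 0, 0;
    0, 0, 0, 0, 1, -1, 0, 0, 0, 0, 0, 0, 0, 0, 0, 0, 0, 0, 0, 0, 0, 0, 0;
    0, 0, 0, 0, 0, 1, -1, 0, 0, 0, 0, 0, 0, 0, 0, 0, 0, 0, 0, 0, 0, 0, 0;
    0, 0, 0, 0, 0, 0, 1, -1, 0, 0, 0, 0, 0, 0, 0, 0, 0, 0, 0, 0, 0, 0, 0;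
    0, 0, 0, 0, 0, 0, 0, 0, 0, 1, -1, 0, 0, 0, 0, 0, 0, 0, 0, 0, 0, 0, 0;
    0, 0, 0, 0, 0, 0, 0, 0, 0, -1, -1, -1, 0, 0, 0, 0, 0, 0, 0, 0, 0, 0, -1;
    0, 0, 0, 0, 0, 0, 0, 0, 0, 0, 1, -1, 0, 0, 0, 0, 0, 0, 0, 0, 0, 0, 0;
    0, 0, 0, 0, 0, 0, 0, 0, 0, 0, 0, 1, -1, 0, 0, 0, 0, 0, 0, 0, 0, 0, 0;
    0, 0, 0, 0, 0, 0, 0, 0, 0, 0, 0, 0, 1, -1, 0, 0, 0, 0, 0, 0, 0, 0, 0;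
    0, 0, 0, 0, 0, 0, 0, 0, 0, 0, 0, 0, 0, 1, -1, 0, 0, 0, 0, 0, 0, 0, 0;
    0, 0, 0, 0, 0, 0, 0, 0, 0, 0, 0, 0, 0, 0, 1, -1, 0, 0, 0, 0, 0, 0, 0;
    0, 0, 0, 0, 0, 0, 0, 0, 0, 0, 0, 0, 0, 0, 0, 1, -1, 0, 0, 0, 0, 0, 0]

def C0 : Matrix (Fin 22) (Fin 23) ℤ :=
  !![0, 0, 0, 0, 0, 0, 0, 0, 0, 0, 0, 0, 0, 0, 0, 0, 0, 2, 0, 1, 1, 0, 0;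
    0, 0, 0, 0, 0, 0, 0, 0, 0, 0, 0, 0, 0, 0, 0, 0, 0, 0, 0, 0, 1, 0, 0;
    0, 0, 0, 0, 0, 0, 0, 0, 0, 0, 0, 0, 0, 0, 0, 0, 0, -1, 0, -1, -1, 0, 0;
    0, 0, 0, 0, 0, 0, 0, 0, 0, 0, 0, 0, 0, 0, 0, 0, 0, 4, 1, 1, 3, 0, 0;
    0, 0, 0, 0, 0, 0, 0, 0, 1, 1, 1, 1, 1, 1, 1, 1, 1, 0, 0, 0, 0, 0, -3;
    0, 0, 0, 0, 0, 0, 0, 0, 0, -1, -1, -1, -1, -1, -1, -1, -1, -1, -1, -1, -1, 0, 3;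
    0, -1, -1, -1, -1, -1, -1, -1, 1, 1, 1, 1, 1, 1, 1, 1, 1, 1, 1, 1, 1, 2, -3;
    0, 0, 0, 0, 0, 0, 0, 0, 3, 3, 3, 3, 3, 3, 3, 3, 3, 3, 3, 3, 3, -1, -9;
    0, 0, -1, -1, -1, -1, -1, -1, 3, 3, 3, 3, 3, 3, 3, 3, 3, 3, 3, 3, 3, 1, -9;
    0, 0, 0, -1, -1, -1, -1, -1, 5, 5, 5, 5, 5, 5, 5, 5, 5, 5, 5, 5, 5, 0, -15;
    0, 0, 0, 0, -1, -1, -1, -1, 4, 4, 4, 4, 4, 4, 4, 4, 4, 4, 4, 4, 4, 0, -12;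
    0, 0, 0, 0, 0, -1, -1, -1, 3, 3, 3, 3, 3, 3, 3, 3, 3, 3, 3, 3, 3, 0, -9;
    0, 0, 0, 0, 0, 0, -1, -1, 2, 2, 2, 2, 2, 2, 2, 2, 2, 2, 2, 2, 2, 0, -6;
    0, 0, 0, 0, 0, 0, 0, -1, 1, 1, 1, 1, 1, 1, 1, 1, 1, 1, 1, 1, 1, 0, -3;
    0, 0, 0, 0, 0, 0, 0, 0, 0, -1, -2, -2, -2, -2, -2, -2, -2, 0, 0, 0, 0, 0, 5;
    0, 0, 0, 0, 0, 0, 0, 0, 0, -3, -3, -3, -3, -3, -3, -3, -3, 0, 0, 0, 0, 0, 8;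
    0, 0, 0, 0, 0, 0, 0, 0, 0, -3, -3, -4, -4, -4, -4, -4, -4, 0, 0, 0, 0, 0, 10;
    0, 0, 0, 0, 0, 0, 0, 0, 0, -5, -5, -5, -6, -6, -6, -6, -6, 0, 0, 0, 0, 0, 15;
    0, 0, 0, 0, 0, 0, 0, 0, 0, -4, -4, -4, -4, -5, -5, -5, -5, 0, 0, 0, 0, 0, 12;
    0, 0, 0, 0, 0, 0, 0, 0, 0, -3, -3, -3, -3, -3, -4, -4, -4, 0, 0, 0, 0, 0, 9;
    0, 0, 0, 0, 0, 0, 0, 0, 0, -2, -2, -2, -2, -2, -2, -3, -3, 0, 0, 0, 0, 0, 6;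
    0, 0, 0, 0, 0, 0, 0, 0, 0, -1, -1, -1, -1, -1, -1, -1, -2, 0, 0, 0, 0, 0, 3]

def Bm : Matrix Idx (Fin 23) ℤ := Matrix.of fun i j => B0 (enc i) j
def Cm : Matrix Idx (Fin 23) ℤ := Matrix.of fun i j => C0 (enc i) j

set_option maxHeartbeats 4000000 in
set_option maxRecDepth 100000 in
lemma fact_perp : ∀ i : Idx, ∑ j : Fin 23, dvec j * hsq j * Bm i j = 0 := by decide

set_option maxHeartbeats 4000000 in
set_option maxRecDepth 100000 in
lemma fact_CB : ∀ i k : Idx, ∑ j : Fin 23, Cm i j * Bm k j = if i = k then 1 else 0 := by decide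

set_option maxHeartbeats 4000000 in
set_option maxRecDepth 100000 in
lemma fact_BC : ∀ j k : Fin 23, ∑ i : Idx, Bm i j * Cm i k =
    (if j = k then 1 else 0) - (if j = 0 then (1:ℤ) else 0) * (dvec k * hsq k) := by decide

set_option maxHeartbeats 4000000 in
set_option maxRecDepth 100000 in
lemma fact_gram : ∀ i k : Idx, ∑ j : Fin 23, dvec j * Bm i j * Bm k j = gramL0 i k :=
  @of_decide_eq_true _ (@Fintype.decidableForallFintype Idx _ (fun i => @Fintype.decidableForallFintype Idx _ (fun k => Int.decEq _ _) _) _) (by rfl)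

lemma mem_ker_iff (x : Fin 23 → ℤ) :
    x ∈ LinearMap.ker perpRow.mulVecLin ↔ ∑ j : Fin 23, dvec j * hsq j * x j = 0 := by
  rw [LinearMap.mem_ker]
  constructor
  · intro h
    have h0 := congrFun h 0
    simpa [Matrix.mulVecLin_apply, Matrix.mulVec, dotProduct, perpRow, mul_assoc]
      using h0
  · intro h
    funext i
    have hi : i = 0 := Subsingleton.elim _ _
    subst hi
    simpa [Matrix.mulVecLin_apply, Matrix.mulVec, dotProduct, perpRow, mul_assoc]
      using h

lemma psi_mem (u : Idx → ℤ) : Bmᵀ.mulVec u ∈ LinearMap.ker perpRow.mulVecLin := by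
  rw [mem_ker_iff]
  have hB : ∀ j : Fin 23, Bmᵀ.mulVec u j = ∑ i : Idx, Bm i j * u i := by
    intro j; simp [Matrix.mulVec, dotProduct, Matrix.transpose_apply]
  calc ∑ j : Fin 23, dvec j * hsq j * Bmᵀ.mulVec u j
      = ∑ j : Fin 23, ∑ i : Idx, (dvec j * hsq j * Bm i j) * u i := by
        refine Finset.sum_congr rfl fun j _ => ?_
        rw [hB, Finset.mul_sum]
        exact Finset.sum_congr rfl fun i _ => by ring
    _ = ∑ i : Idx, ∑ j : Fin 23, (dvec j * hsq j * Bm i j) * u i := Finset.sum_comm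
    _ = ∑ i : Idx, (∑ j : Fin 23, dvec j * hsq j * Bm i j) * u i := by
        refine Finset.sum_congr rfl fun i _ => ?_
        rw [Finset.sum_mul]
    _ = 0 := by simp [fact_perp]

lemma CB_apply (u : Idx → ℤ) : Cm.mulVec (Bmᵀ.mulVec u) = u := by
  funext i
  have hB : ∀ j : Fin 23, Bmᵀ.mulVec u j = ∑ k : Idx, Bm k j * u k := by
    intro j; simp [Matrix.mulVec, dotProduct, Matrix.transpose_apply]
  calc Cm.mulVec (Bmᵀ.mulVec u) i
      = ∑ j : Fin 23, Cm i j * Bmᵀ.mulVec u j := by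
        simp [Matrix.mulVec, dotProduct]
    _ = ∑ j : Fin 23, ∑ k : Idx, (Cm i j * Bm k j) * u k := by
        refine Finset.sum_congr rfl fun j _ => ?_
        rw [hB, Finset.mul_sum]
        exact Finset.sum_congr rfl fun k _ => by ring
    _ = ∑ k : Idx, ∑ j : Fin 23, (Cm i j * Bm k j) * u k := Finset.sum_comm
    _ = ∑ k : Idx, (if i = k then (1:ℤ) else 0) * u k := by
        refine Finset.sum_congr rfl fun k _ => ?_
        rw [← Finset.sum_mul, fact_CB]
    _ = u i := by simp

lemma BC_apply (x : Fin 23 → ℤ) (hx : x ∈ LinearMap.ker perpRow.mulVecLin) :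
    Bmᵀ.mulVec (Cm.mulVec x) = x := by
  have hker : ∑ k : Fin 23, dvec k * hsq k * x k = 0 := (mem_ker_iff x).mp hx
  funext j
  have hC : ∀ i : Idx, Cm.mulVec x i = ∑ k : Fin 23, Cm i k * x k := by
    intro i; simp [Matrix.mulVec, dotProduct]
  calc Bmᵀ.mulVec (Cm.mulVec x) j
      = ∑ i : Idx, Bm i j * Cm.mulVec x i := by
        simp [Matrix.mulVec, dotProduct, Matrix.transpose_apply]
    _ = ∑ i : Idx, ∑ k : Fin 23, (Bm i j * Cm i k) * x k := by
        refine Finset.sum_congr rfl fun i _ => ?_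
        rw [hC, Finset.mul_sum]
        exact Finset.sum_congr rfl fun k _ => by ring
    _ = ∑ k : Fin 23, ∑ i : Idx, (Bm i j * Cm i k) * x k := Finset.sum_comm
    _ = ∑ k : Fin 23, ((if j = k then (1:ℤ) else 0)
          - (if j = 0 then (1:ℤ) else 0) * (dvec k * hsq k)) * x k := by
        refine Finset.sum_congr rfl fun k _ => ?_
        rw [← Finset.sum_mul, fact_BC]
    _ = (∑ k : Fin 23, (if j = k then (1:ℤ) else 0) * x k)
          - (if j = 0 then (1:ℤ) else 0) * ∑ k : Fin 23, dvec k * hsq k * x k := by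
        rw [Finset.mul_sum, ← Finset.sum_sub_distrib]
        exact Finset.sum_congr rfl fun k _ => by ring
    _ = x j := by rw [hker]; simp

lemma key_bilin (u w : Idx → ℤ) :
    ∑ j : Fin 23, dvec j * Bmᵀ.mulVec u j * Bmᵀ.mulVec w j
      = ∑ i : Idx, ∑ k : Idx, u i * gramL0 i k * w k := by
  have hB : ∀ (z : Idx → ℤ) (j : Fin 23), Bmᵀ.mulVec z j = ∑ i : Idx, Bm i j * z i := by
    intro z j; simp [Matrix.mulVec, dotProduct, Matrix.transpose_apply]
  calc ∑ j : Fin 23, dvec j * Bmᵀ.mulVec u j * Bmᵀ.mulVec w j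
      = ∑ j : Fin 23, ∑ i : Idx, ∑ k : Idx, u i * (dvec j * Bm i j * Bm k j) * w k := by
        refine Finset.sum_congr rfl fun j _ => ?_
        rw [hB u j, hB w j, mul_assoc, Finset.sum_mul_sum, Finset.mul_sum]
        refine Finset.sum_congr rfl fun i _ => ?_
        rw [Finset.mul_sum]
        exact Finset.sum_congr rfl fun k _ => by ring
    _ = ∑ i : Idx, ∑ j : Fin 23, ∑ k : Idx, u i * (dvec j * Bm i j * Bm k j) * w k :=
        Finset.sum_comm
    _ = ∑ i : Idx, ∑ k : Idx, ∑ j : Fin 23, u i * (dvec j * Bm i j * Bm k j) * w k :=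
        Finset.sum_congr rfl fun i _ => Finset.sum_comm
    _ = ∑ i : Idx, ∑ k : Idx, u i * gramL0 i k * w k := by
        refine Finset.sum_congr rfl fun i _ => Finset.sum_congr rfl fun k _ => ?_
        rw [← Finset.sum_mul, ← Finset.mul_sum, fact_gram]

def phiFwd : (LinearMap.ker perpRow.mulVecLin) →ₗ[ℤ] (Idx → ℤ) :=
  Cm.mulVecLin ∘ₗ (LinearMap.ker perpRow.mulVecLin).subtype

def psiBack : (Idx → ℤ) →ₗ[ℤ] (LinearMap.ker perpRow.mulVecLin) :=
  LinearMap.codRestrict _ Bmᵀ.mulVecLin fun u => by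
    rw [Matrix.mulVecLin_apply]; exact psi_mem u

lemma phiFwd_apply (x : LinearMap.ker perpRow.mulVecLin) :
    phiFwd x = Cm.mulVec (x : Fin 23 → ℤ) := by
  simp [phiFwd, Matrix.mulVecLin_apply]

lemma psiBack_coe (u : Idx → ℤ) :
    ((psiBack u : LinearMap.ker perpRow.mulVecLin) : Fin 23 → ℤ) = Bmᵀ.mulVec u := by
  simp [psiBack, Matrix.mulVecLin_apply, Matrix.mulVec_transpose]

lemma comp1 : phiFwd ∘ₗ psiBack = LinearMap.id := by
  apply LinearMap.ext; intro u
  show phiFwd (psiBack u) = u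
  rw [phiFwd_apply, psiBack_coe, CB_apply]

lemma comp2 : psiBack ∘ₗ phiFwd = LinearMap.id := by
  apply LinearMap.ext; intro x
  apply Subtype.ext
  show ((psiBack (phiFwd x) : LinearMap.ker perpRow.mulVecLin) : Fin 23 → ℤ) = ↑x
  rw [psiBack_coe, phiFwd_apply]
  exact BC_apply _ x.2


/-- The orthogonal complement of v inside (ℤ²³, diag(1,…,1,-1,-1)), where
v = (1,…,1,3,3) has square 3, is isometric to ℤ²² with the block-diagonal
form A₂ ⊕ U ⊕ U ⊕ E₈ ⊕ E₈. -/
theorem stmt_11 :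
    ∃ φ : LinearMap.ker perpRow.mulVecLin ≃ₗ[ℤ]
        ((Fin 2 ⊕ (Fin 2 ⊕ (Fin 2 ⊕ (Fin 8 ⊕ Fin 8)))) → ℤ),
      ∀ x y : LinearMap.ker perpRow.mulVecLin,
        ∑ i : Fin 23, dvec i * (x : Fin 23 → ℤ) i * (y : Fin 23 → ℤ) i =
          ∑ i, ∑ j, φ x i * gramL0 i j * φ y j := by
  refine ⟨LinearEquiv.ofLinear phiFwd psiBack comp1 comp2, ?_⟩
  intro x y
  have hphi : ∀ z : LinearMap.ker perpRow.mulVecLin,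
      (LinearEquiv.ofLinear phiFwd psiBack comp1 comp2) z = Cm.mulVec (z : Fin 23 → ℤ) :=
    fun z => by rw [LinearEquiv.ofLinear_apply, phiFwd_apply]
  have hx := BC_apply _ x.2
  have hy := BC_apply _ y.2
  rw [← hx, ← hy, key_bilin, hphi x, hphi y]
end
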